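/- arXiv:2410.04837 — 2 statements merged into one kernel-verified Lean document; each statement's English description precedes it below -/
import Mathlib

section
/- Let C ∈ ℂ^{N×N} be a matrix with Jordan condition number κ̄_C and largest Jordan block dimension d, and suppose δ ∈ (0,1) satisfies: Re(λ) ∉ (0, 2δ) for every eigenvalue λ of C. Then the restricted Kreiss constant K_δ(C) := δ · sup_{y∈ℝ} ‖((δ+iy)I − C)^{−1}‖ is at most κ̄_C · δ^{−(d−1)} · (1−δ^d)/(1−δ). -/
/-!
For `z = δ + iy` the spectral hypothesis gives `‖z - λ‖ ≥ |Re (z - λ)| ≥ δ` for every eigenvalue.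
A Jordan block of size `n ≤ d` is `λ + S` with `S` the lower shift, `S ^ d = 0`, so its resolvent
is the finite Neumann series `∑_{k<d} (z - λ)^{-(k+1)} S^k`; since `‖S‖ ≤ 1` this has norm at most
`∑_{k<d} δ^{-(k+1)}`. The block-diagonal embedding is a `⋆`-homomorphism of C⋆-algebras, hence
contractive, so the same bound holds for the resolvent of the whole Jordan matrix. Conjugating by
`T` costs `‖T‖ ‖T⁻¹‖`, and `δ ∑_{k<d} δ^{-(k+1)} = δ^{-(d-1)} (1 - δ^d) / (1 - δ)`.
-/

open scoped Matrix.Norms.L2Operator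

/-- The `d × d` lower-triangular Jordan block with diagonal `lam` and subdiagonal `1`. -/
def jordanBlock (lam : ℂ) (d : ℕ) : Matrix (Fin d) (Fin d) ℂ :=
  fun i j => if (i : ℕ) = j then lam else if (i : ℕ) = (j : ℕ) + 1 then 1 else 0

open Finset Matrix

theorem smul_one_sub_mul_sum_inv_pow_smul {𝕜 A : Type*} [Field 𝕜] [Ring A] [Algebra 𝕜 A]
    {N : A} {d : ℕ} (hN : N ^ d = 0) {a : 𝕜} (ha : a ≠ 0) :
    (a • 1 - N) * ∑ k ∈ range d, a⁻¹ ^ (k + 1) • N ^ k = 1 := by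
  have hfactor : a • 1 - N = a • (1 - a⁻¹ • N) := by
    rw [smul_sub, smul_smul, mul_inv_cancel₀ ha, one_smul]
  have hsum : ∑ k ∈ range d, a⁻¹ ^ (k + 1) • N ^ k = a⁻¹ • ∑ k ∈ range d, (a⁻¹ • N) ^ k := by
    simp only [smul_sum, smul_pow, smul_smul, pow_succ']
  rw [hfactor, hsum, smul_mul_smul_comm, mul_inv_cancel₀ ha, one_smul, mul_neg_geom_sum,
    smul_pow, hN, smul_zero, sub_zero]

theorem norm_sum_pow_succ_smul_le {𝕜 A : Type*} [NormedField 𝕜] [SeminormedRing A]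
    [NormedAlgebra 𝕜 A] {N : A} (hN : ∀ k, ‖N ^ k‖ ≤ 1) (w : 𝕜) (d : ℕ) :
    ‖∑ k ∈ range d, w ^ (k + 1) • N ^ k‖ ≤ ∑ k ∈ range d, ‖w‖ ^ (k + 1) := by
  refine (norm_sum_le _ _).trans (sum_le_sum fun k _ => ?_)
  rw [norm_smul, norm_pow]
  exact mul_le_of_le_one_right (by positivity) (hN k)

namespace Matrix

def lowerShift (R : Type*) [Zero R] [One R] (n : ℕ) : Matrix (Fin n) (Fin n) R :=
  of fun i j => if (i : ℕ) = j + 1 then 1 else 0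

theorem pow_apply_eq_zero_of_lt {R : Type*} [Semiring R] {n : ℕ} {M : Matrix (Fin n) (Fin n) R}
    (hM : ∀ i j, M i j ≠ 0 → (j : ℕ) < i) (k : ℕ) {i j : Fin n} (hij : (i : ℕ) < j + k) :
    (M ^ k) i j = 0 := by
  induction k generalizing i with
  | zero => simpa [one_apply] using fun h => by omega
  | succ k ih =>
    rw [pow_succ', mul_apply]
    refine sum_eq_zero fun m _ => ?_
    by_cases hm : M i m = 0
    · rw [hm, zero_mul]
    · rw [ih (by have := hM i m hm; omega), mul_zero]

theorem lowerShift_pow_eq_zero (R : Type*) [Semiring R] {n k : ℕ} (h : n ≤ k) :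
    lowerShift R n ^ k = 0 := by
  ext i j
  refine pow_apply_eq_zero_of_lt (fun i j hij => ?_) k (by omega)
  by_contra hji
  simp [lowerShift, show (i : ℕ) ≠ j + 1 by omega] at hij

theorem l2_opNorm_lowerShift_le (𝕜 : Type*) [RCLike 𝕜] (n : ℕ) : ‖lowerShift 𝕜 n‖ ≤ 1 := by
  rw [← l2_opNorm_toEuclideanCLM]
  refine ContinuousLinearMap.opNorm_le_bound _ zero_le_one fun x => ?_
  rw [one_mul, EuclideanSpace.norm_eq, EuclideanSpace.norm_eq]
  simp only [ofLp_toEuclideanCLM]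
  refine Real.sqrt_le_sqrt ?_
  cases n with
  | zero => simp
  | succ n =>
    have hzero : (lowerShift 𝕜 (n + 1) *ᵥ x) 0 = 0 := by
      simp [lowerShift, mulVec, dotProduct]
    have hsucc : ∀ i : Fin n, (lowerShift 𝕜 (n + 1) *ᵥ x) i.succ = x i.castSucc := by
      intro i
      simp only [lowerShift, mulVec, dotProduct, of_apply, Fin.val_succ, add_left_inj, ite_mul,
        one_mul, zero_mul]
      rw [Fintype.sum_eq_single i.castSucc fun j hj => if_neg fun h => hj (Fin.ext h.symm)]
      simp
    rw [Fin.sum_univ_succ, Fin.sum_univ_castSucc (fun i => ‖x i‖ ^ 2), hzero]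
    simp only [hsucc, norm_zero, zero_pow two_ne_zero, zero_add]
    exact le_add_of_nonneg_right (by positivity)

theorem l2_opNorm_one_le (𝕜 : Type*) [RCLike 𝕜] (n : Type*) [Fintype n] [DecidableEq n] :
    ‖(1 : Matrix n n 𝕜)‖ ≤ 1 := by
  rw [← diagonal_one, l2_opNorm_diagonal]
  exact (pi_norm_le_iff_of_nonneg zero_le_one).mpr fun _ => norm_one.le

theorem l2_opNorm_pow_le_one {𝕜 n : Type*} [RCLike 𝕜] [Fintype n] [DecidableEq n]
    {A : Matrix n n 𝕜} (hA : ‖A‖ ≤ 1) (k : ℕ) : ‖A ^ k‖ ≤ 1 := by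
  induction k with
  | zero => exact l2_opNorm_one_le 𝕜 n
  | succ k ih =>
    rw [pow_succ]
    exact (l2_opNorm_mul _ _).trans (mul_le_one₀ ih (norm_nonneg _) hA)

section BlockDiagonal

variable {ι : Type*} [Fintype ι] [DecidableEq ι] (n : ι → Type*) [∀ i, Fintype (n i)]
  [∀ i, DecidableEq (n i)]

def blockDiagonal'StarAlgHom : (∀ i, Matrix (n i) (n i) ℂ) →⋆ₐ[ℂ] Matrix (Σ i, n i) (Σ i, n i) ℂ :=
  { blockDiagonal'RingHom n ℂ with
    commutes' := fun c => by simp [Algebra.algebraMap_eq_smul_one, blockDiagonal'_smul]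
    map_star' := fun A => (blockDiagonal'_conjTranspose A).symm }

variable {n}

theorem l2_opNorm_blockDiagonal'_le (A : ∀ i, Matrix (n i) (n i) ℂ) : ‖blockDiagonal' A‖ ≤ ‖A‖ :=
  NonUnitalStarAlgHom.norm_apply_le (blockDiagonal'StarAlgHom n) A

end BlockDiagonal

theorem inv_smul_one_sub_conj {R n : Type*} [CommRing R] [Fintype n] [DecidableEq n]
    {T J N : Matrix n n R} (hT : IsUnit T) {z : R} (hN : (z • 1 - J) * N = 1) :
    (z • 1 - T * J * T⁻¹)⁻¹ = T * N * T⁻¹ := by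
  have hdet : IsUnit T.det := (isUnit_iff_isUnit_det T).mp hT
  have hconj : z • 1 - T * J * T⁻¹ = T * (z • 1 - J) * T⁻¹ := by
    rw [Matrix.mul_sub, Matrix.sub_mul, Matrix.mul_smul, Matrix.smul_mul, Matrix.mul_one,
      mul_nonsing_inv T hdet]
  refine inv_eq_right_inv ?_
  calc (z • 1 - T * J * T⁻¹) * (T * N * T⁻¹) = T * ((z • 1 - J) * (T⁻¹ * T) * N) * T⁻¹ := by
        rw [hconj]
        simp only [Matrix.mul_assoc]
    _ = 1 := by
        rw [nonsing_inv_mul T hdet, Matrix.mul_one, hN, Matrix.mul_one, mul_nonsing_inv T hdet]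

end Matrix

theorem smul_one_sub_jordanBlock (lam z : ℂ) (n : ℕ) :
    z • 1 - jordanBlock lam n = (z - lam) • 1 - lowerShift ℂ n := by
  ext i j
  by_cases h : i = j
  · subst h
    simp [jordanBlock, lowerShift]
  · have h' : (i : ℕ) ≠ j := fun e => h (Fin.ext e)
    simp [jordanBlock, lowerShift, h, h', one_apply]

/-- The truncated Neumann series of `(z - jordanBlock lam n)⁻¹`; it is the resolvent once
`n ≤ d`. -/
noncomputable def jordanResolvent (d : ℕ) (lam z : ℂ) (n : ℕ) : Matrix (Fin n) (Fin n) ℂ :=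
  ∑ k ∈ range d, (z - lam)⁻¹ ^ (k + 1) • lowerShift ℂ n ^ k

theorem smul_one_sub_jordanBlock_mul_jordanResolvent {n d : ℕ} (hn : n ≤ d) {lam z : ℂ}
    (hz : z ≠ lam) : (z • 1 - jordanBlock lam n) * jordanResolvent d lam z n = 1 := by
  rw [smul_one_sub_jordanBlock]
  exact smul_one_sub_mul_sum_inv_pow_smul (lowerShift_pow_eq_zero ℂ hn) (sub_ne_zero.mpr hz)

theorem norm_jordanResolvent_le (d : ℕ) (lam z : ℂ) (n : ℕ) :
    ‖jordanResolvent d lam z n‖ ≤ ∑ k ∈ range d, ‖z - lam‖⁻¹ ^ (k + 1) := by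
  rw [← norm_inv]
  exact norm_sum_pow_succ_smul_le (l2_opNorm_pow_le_one (l2_opNorm_lowerShift_le ℂ n)) _ d

section JordanMatrix

variable {ι : Type*} [Fintype ι] [DecidableEq ι] {n : ι → ℕ} {lam : ι → ℂ} {z : ℂ}

theorem smul_one_sub_blockDiagonal'_jordanBlock_mul {d : ℕ} (hn : ∀ l, n l ≤ d)
    (hz : ∀ l, z ≠ lam l) :
    (z • 1 - blockDiagonal' fun l => jordanBlock (lam l) (n l)) *
      blockDiagonal' (fun l => jordanResolvent d (lam l) z (n l)) = 1 := by
  rw [← blockDiagonal'_one, ← blockDiagonal'_smul, ← blockDiagonal'_sub, ← blockDiagonal'_mul]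
  congr 1
  funext l
  exact smul_one_sub_jordanBlock_mul_jordanResolvent (hn l) (hz l)

theorem norm_blockDiagonal'_jordanResolvent_le {δ : ℝ} (hδ : 0 < δ)
    (hz : ∀ l, δ ≤ ‖z - lam l‖) (d : ℕ) :
    ‖blockDiagonal' fun l => jordanResolvent d (lam l) z (n l)‖ ≤
      ∑ k ∈ range d, δ⁻¹ ^ (k + 1) := by
  refine (l2_opNorm_blockDiagonal'_le _).trans ?_
  refine (pi_norm_le_iff_of_nonneg (by positivity)).mpr fun l => ?_
  refine (norm_jordanResolvent_le _ _ _ _).trans (sum_le_sum fun k _ => ?_)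
  gcongr
  exact hz l

end JordanMatrix

theorem le_norm_sub_of_re_notMem_Ioo {δ : ℝ} (y : ℝ) {lam : ℂ}
    (h : lam.re ∉ Set.Ioo 0 (2 * δ)) : δ ≤ ‖(δ + y * Complex.I) - lam‖ := by
  refine le_trans ?_ (Complex.abs_re_le_norm _)
  simp only [Complex.sub_re, Complex.add_re, Complex.ofReal_re, Complex.mul_re,
    Complex.ofReal_im, Complex.I_re, Complex.I_im]
  rw [Set.mem_Ioo, not_and_or, not_lt, not_lt] at h
  rcases h with h | h
  · exact le_abs.mpr (Or.inl (by linarith))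
  · exact le_abs.mpr (Or.inr (by linarith))

theorem mul_sum_inv_pow_succ {δ : ℝ} (h0 : δ ≠ 0) (h1 : δ ≠ 1) (d : ℕ) :
    δ * ∑ k ∈ range d, δ⁻¹ ^ (k + 1) = δ⁻¹ ^ (d - 1) * ((1 - δ ^ d) / (1 - δ)) := by
  cases d with
  | zero => simp
  | succ d =>
    have hδ1 : (1 : ℝ) - δ ≠ 0 := sub_ne_zero.mpr h1.symm
    simp only [mul_sum, pow_succ', ← mul_assoc, mul_inv_cancel₀ h0, one_mul, add_tsub_cancel_right]
    rw [geom_sum_eq (inv_ne_one.mpr h1)]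
    simp only [inv_pow]
    field_simp
    ring

/-- Bound on the restricted Kreiss constant
`K_δ(C) = δ · sup_{y ∈ ℝ} ‖((δ+iy)I − C)⁻¹‖` for a matrix `C = T J T⁻¹` in Jordan form
with largest block of size at most `d`, when no eigenvalue has real part in `(0, 2δ)`. -/
theorem restricted_kreiss_constant_bound
    (s : ℕ) (dsz : Fin s → ℕ) (lam : Fin s → ℂ) (d : ℕ) (hd : ∀ l, dsz l ≤ d)
    (C T : Matrix (Σ l, Fin (dsz l)) (Σ l, Fin (dsz l)) ℂ) (hT : IsUnit T)
    (hC : C = T * Matrix.blockDiagonal' (fun l => jordanBlock (lam l) (dsz l)) * T⁻¹)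
    (δ : ℝ) (hδ0 : 0 < δ) (hδ1 : δ < 1)
    (hspec : ∀ l, (lam l).re ∉ Set.Ioo (0 : ℝ) (2 * δ)) :
    δ * ⨆ y : ℝ,
        ‖((((δ : ℂ) + y * Complex.I) •
            (1 : Matrix (Σ l, Fin (dsz l)) (Σ l, Fin (dsz l)) ℂ)) - C)⁻¹‖ ≤
      ‖T‖ * ‖T⁻¹‖ * (δ⁻¹ ^ (d - 1) * ((1 - δ ^ d) / (1 - δ))) := by
  set bound := ∑ k ∈ range d, δ⁻¹ ^ (k + 1)
  have hresolvent : ∀ y : ℝ, ‖((((δ : ℂ) + y * Complex.I) •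
      (1 : Matrix (Σ l, Fin (dsz l)) (Σ l, Fin (dsz l)) ℂ)) - C)⁻¹‖ ≤ ‖T‖ * ‖T⁻¹‖ * bound := by
    intro y
    set z : ℂ := δ + y * Complex.I
    have hdist : ∀ l, δ ≤ ‖z - lam l‖ := fun l => le_norm_sub_of_re_notMem_Ioo y (hspec l)
    have hne : ∀ l, z ≠ lam l := fun l h => by simpa [h] using hδ0.trans_le (hdist l)
    rw [hC, inv_smul_one_sub_conj hT (smul_one_sub_blockDiagonal'_jordanBlock_mul hd hne)]
    calc _ ≤ ‖T‖ * ‖blockDiagonal' fun l => jordanResolvent d (lam l) z (dsz l)‖ * ‖T⁻¹‖ :=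
          norm_mul₃_le
      _ ≤ ‖T‖ * bound * ‖T⁻¹‖ := by
          gcongr
          exact norm_blockDiagonal'_jordanResolvent_le hδ0 hdist d
      _ = ‖T‖ * ‖T⁻¹‖ * bound := by ring
  calc _ ≤ δ * (‖T‖ * ‖T⁻¹‖ * bound) := by
        gcongr
        exact ciSup_le hresolvent
    _ = _ := by rw [mul_left_comm, mul_sum_inv_pow_succ hδ0.ne' hδ1.ne]
end

section
/- Let |ψ⟩ = Σ_l β_l |λ_l⟩ be a unit vector, where {|λ_l⟩} are the columns of a matrix S with condition number κ_S = σ_max(S)/σ_min(S). Then for any collection of vectors {|χ_l⟩} in an auxiliary Hilbert space, (min_l ‖|χ_l⟩‖)/κ_S ≤ ‖Σ_l β_l |χ_l⟩ ⊗ |λ_l⟩‖ ≤ κ_S · max_l ‖|χ_l⟩‖. -/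
/-!
The tensor is `(I ⊗ S)` applied to `W = Σ_l β_l χ_l ⊗ e_l`, so acting row by row with `S` gives
`σ_min ‖W‖ ≤ ‖(I ⊗ S) W‖ ≤ σ_max ‖W‖`. The columns of `W` are `β_l χ_l`, so
`‖W‖² = Σ_l |β_l|² ‖χ_l‖²` lies between `(min_l ‖χ_l‖)² ‖β‖²` and `(max_l ‖χ_l‖)² ‖β‖²`.
Finally `‖Sβ‖ = 1` forces `1/σ_max ≤ ‖β‖ ≤ 1/σ_min`.
-/

open Finset WithLp

section
variable {𝕜 : Type*} [RCLike 𝕜] {ι κ μ : Type*}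

/-- The vector `Σ_l β_l χ_l ⊗ e_l`. -/
def superposition (β : EuclideanSpace 𝕜 κ) (χ : κ → EuclideanSpace 𝕜 ι) :
    EuclideanSpace 𝕜 (ι × κ) :=
  toLp 2 fun p => β p.2 * χ p.2 p.1

theorem row_tensor_eq_toEuclideanLin [Fintype κ] [DecidableEq κ] (S : Matrix μ κ 𝕜)
    (β : EuclideanSpace 𝕜 κ) (χ : κ → EuclideanSpace 𝕜 ι) (i : ι) :
    (toLp 2 fun j => ∑ l, β l * χ l i * S j l) =
      Matrix.toEuclideanLin S (toLp 2 fun l => β l * χ l i) := by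
  ext j
  simp only [Matrix.toLpLin_toLp, Matrix.toLin'_apply, Matrix.mulVec, dotProduct]
  exact sum_congr rfl fun l _ => by ring

variable [Fintype ι] [Fintype κ] [Fintype μ]

theorem EuclideanSpace.norm_sq_prod_eq_sum_rows (f : ι × κ → 𝕜) :
    ‖toLp 2 f‖ ^ 2 = ∑ i, ‖toLp 2 fun j => f (i, j)‖ ^ 2 := by
  simp only [EuclideanSpace.norm_sq_eq, Fintype.sum_prod_type]

theorem EuclideanSpace.norm_sq_prod_eq_sum_cols (f : ι × κ → 𝕜) :
    ‖toLp 2 f‖ ^ 2 = ∑ j, ‖toLp 2 fun i => f (i, j)‖ ^ 2 := by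
  simp only [EuclideanSpace.norm_sq_eq, Fintype.sum_prod_type_right]

theorem EuclideanSpace.mul_norm_le_mul_norm_of_rows {a b : ℝ} (ha : 0 ≤ a) (hb : 0 ≤ b)
    (f : ι × κ → 𝕜) (g : ι × μ → 𝕜)
    (h : ∀ i, a * ‖toLp 2 fun j => f (i, j)‖ ≤ b * ‖toLp 2 fun j => g (i, j)‖) :
    a * ‖toLp 2 f‖ ≤ b * ‖toLp 2 g‖ := by
  refine le_of_sq_le_sq ?_ (by positivity)
  simp only [mul_pow, norm_sq_prod_eq_sum_rows, mul_sum]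
  refine sum_le_sum fun i _ => ?_
  rw [← mul_pow, ← mul_pow]
  exact pow_le_pow_left₀ (by positivity) (h i) 2

theorem norm_sq_superposition (β : EuclideanSpace 𝕜 κ) (χ : κ → EuclideanSpace 𝕜 ι) :
    ‖superposition β χ‖ ^ 2 = ∑ l, ‖β l‖ ^ 2 * ‖χ l‖ ^ 2 := by
  rw [superposition, EuclideanSpace.norm_sq_prod_eq_sum_cols]
  refine sum_congr rfl fun l _ => ?_
  rw [← mul_pow, ← norm_smul]
  rfl

theorem iInf_norm_mul_norm_le_norm_superposition (β : EuclideanSpace 𝕜 κ)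
    (χ : κ → EuclideanSpace 𝕜 ι) :
    (⨅ l, ‖χ l‖) * ‖β‖ ≤ ‖superposition β χ‖ := by
  have hc : 0 ≤ ⨅ l, ‖χ l‖ := Real.iInf_nonneg fun l => norm_nonneg _
  refine le_of_sq_le_sq ?_ (norm_nonneg _)
  rw [norm_sq_superposition, mul_pow, EuclideanSpace.norm_sq_eq, mul_sum]
  refine sum_le_sum fun l _ => ?_
  rw [mul_comm]
  gcongr
  exact ciInf_le (Finite.bddBelow_range _) l

theorem norm_superposition_le_iSup_norm_mul_norm (β : EuclideanSpace 𝕜 κ)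
    (χ : κ → EuclideanSpace 𝕜 ι) :
    ‖superposition β χ‖ ≤ (⨆ l, ‖χ l‖) * ‖β‖ := by
  have hM : 0 ≤ ⨆ l, ‖χ l‖ := Real.iSup_nonneg fun l => norm_nonneg _
  refine le_of_sq_le_sq ?_ (by positivity)
  rw [norm_sq_superposition, mul_pow, EuclideanSpace.norm_sq_eq, mul_sum]
  refine sum_le_sum fun l _ => ?_
  rw [mul_comm]
  gcongr
  exact le_ciSup (f := fun l => ‖χ l‖) (Finite.bddAbove_range _) l

variable [DecidableEq κ]

theorem mul_norm_superposition_le_norm_tensor {σ : ℝ} (hσ : 0 ≤ σ) (S : Matrix μ κ 𝕜)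
    (hS : ∀ v, σ * ‖v‖ ≤ ‖Matrix.toEuclideanLin S v‖)
    (β : EuclideanSpace 𝕜 κ) (χ : κ → EuclideanSpace 𝕜 ι) :
    σ * ‖superposition β χ‖ ≤ ‖toLp 2 fun p : ι × μ => ∑ l, β l * χ l p.1 * S p.2 l‖ := by
  rw [superposition]
  simpa only [one_mul] using EuclideanSpace.mul_norm_le_mul_norm_of_rows hσ zero_le_one _ _
    fun i => by simpa only [one_mul, row_tensor_eq_toEuclideanLin] using hS _

theorem norm_tensor_le_mul_norm_superposition {σ : ℝ} (hσ : 0 ≤ σ) (S : Matrix μ κ 𝕜)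
    (hS : ∀ v, ‖Matrix.toEuclideanLin S v‖ ≤ σ * ‖v‖)
    (β : EuclideanSpace 𝕜 κ) (χ : κ → EuclideanSpace 𝕜 ι) :
    ‖toLp 2 fun p : ι × μ => ∑ l, β l * χ l p.1 * S p.2 l‖ ≤ σ * ‖superposition β χ‖ := by
  rw [superposition]
  simpa only [one_mul] using EuclideanSpace.mul_norm_le_mul_norm_of_rows zero_le_one hσ _ _
    fun i => by simpa only [one_mul, row_tensor_eq_toEuclideanLin] using hS _

end

/-- Propagation of norms through a superposition: if `|ψ⟩ = Σ_l β_l |λ_l⟩` is a unit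
vector, where `|λ_l⟩` are the columns of `S` and `κ_S = σ_max/σ_min`, then for any
ancilla vectors `|χ_l⟩`,
`(min_l ‖χ_l‖)/κ_S ≤ ‖Σ_l β_l |χ_l⟩ ⊗ |λ_l⟩‖ ≤ κ_S · max_l ‖χ_l‖`. -/
theorem tensor_superposition_norm_bounds
    (b m k : ℕ) (S : Matrix (Fin m) (Fin k) ℂ) (σmin σmax : ℝ)
    (hσmin : 0 < σmin) (hσmax : 0 < σmax)
    (hmin : ∀ v : EuclideanSpace ℂ (Fin k), σmin * ‖v‖ ≤ ‖Matrix.toEuclideanLin S v‖)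
    (hmax : ∀ v : EuclideanSpace ℂ (Fin k), ‖Matrix.toEuclideanLin S v‖ ≤ σmax * ‖v‖)
    (β : EuclideanSpace ℂ (Fin k)) (hψ : ‖Matrix.toEuclideanLin S β‖ = 1)
    (χ : Fin k → EuclideanSpace ℂ (Fin b)) :
    (⨅ l, ‖χ l‖) / (σmax / σmin) ≤
      ‖(WithLp.equiv 2 (Fin b × Fin m → ℂ)).symm
        (fun p => ∑ l, β l * χ l p.1 * S p.2 l)‖ ∧
    ‖(WithLp.equiv 2 (Fin b × Fin m → ℂ)).symm
        (fun p => ∑ l, β l * χ l p.1 * S p.2 l)‖ ≤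
      (σmax / σmin) * ⨆ l, ‖χ l‖ := by
  have hβ_lower : 1 / σmax ≤ ‖β‖ := by
    rw [div_le_iff₀ hσmax, ← hψ, mul_comm]
    exact hmax β
  have hβ_upper : ‖β‖ ≤ 1 / σmin := by
    rw [le_div_iff₀ hσmin, ← hψ, mul_comm]
    exact hmin β
  have hc : 0 ≤ ⨅ l, ‖χ l‖ := Real.iInf_nonneg fun l => norm_nonneg _
  have hM : 0 ≤ ⨆ l, ‖χ l‖ := Real.iSup_nonneg fun l => norm_nonneg _
  rw [WithLp.equiv_symm_apply]
  constructor
  · calc (⨅ l, ‖χ l‖) / (σmax / σmin) = σmin * ((⨅ l, ‖χ l‖) * (1 / σmax)) := by field_simp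
      _ ≤ σmin * ((⨅ l, ‖χ l‖) * ‖β‖) := by gcongr
      _ ≤ σmin * ‖superposition β χ‖ := by
        gcongr; exact iInf_norm_mul_norm_le_norm_superposition β χ
      _ ≤ _ := mul_norm_superposition_le_norm_tensor hσmin.le S hmin β χ
  · calc _ ≤ σmax * ‖superposition β χ‖ :=
          norm_tensor_le_mul_norm_superposition hσmax.le S hmax β χ
      _ ≤ σmax * ((⨆ l, ‖χ l‖) * ‖β‖) := by
        gcongr; exact norm_superposition_le_iSup_norm_mul_norm β χ
      _ ≤ σmax * ((⨆ l, ‖χ l‖) * (1 / σmin)) := by gcongr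
      _ = (σmax / σmin) * ⨆ l, ‖χ l‖ := by field_simp
end
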